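/- (The lowering and raising maps commute with the infinitesimal action of passive linear optics.) Fix m ∈ ℕ. For any m×m complex matrix h, define the second-quantized operator D_h := Σ_{i,j=1}^m h_{ij} · (a_i† ∘ a_j) ∈ End(V), and for T ∈ End(V) write ad_h(T) := D_h∘T − T∘D_h. Then for every ℂ-linear endomorphism T of V = ℂ[x_1,…,x_m], one has L(ad_h(T)) = ad_h(L(T)) and R(ad_h(T)) = ad_h(R(T)); that is, L and R intertwine the adjoint action of the Lie algebra gl(m) realized by the quadratic Hamiltonians a_i† a_j. -/

import Mathlib

open MvPolynomial

noncomputable section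

/-- The Bargmann/polynomial realization of the `m`-mode bosonic Fock space. -/
abbrev V (m : ℕ) := MvPolynomial (Fin m) ℂ

/-- The creation operator `a_s†`: multiplication by `x_s`. -/
def aDag (m : ℕ) (s : Fin m) : Module.End ℂ (V m) := LinearMap.mulLeft ℂ (X s)

/-- The annihilation operator `a_s`: the partial derivative `∂/∂x_s`. -/
def aAnn (m : ℕ) (s : Fin m) : Module.End ℂ (V m) := (pderiv s).toLinearMap

/-- The lowering map `L(T) = Σ_s a_s ∘ T ∘ a_s†`. -/
def Lop (m : ℕ) (T : Module.End ℂ (V m)) : Module.End ℂ (V m) :=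
  ∑ s, aAnn m s ∘ₗ T ∘ₗ aDag m s

/-- The raising map `R(T) = Σ_s a_s† ∘ T ∘ a_s`. -/
def Rop (m : ℕ) (T : Module.End ℂ (V m)) : Module.End ℂ (V m) :=
  ∑ s, aDag m s ∘ₗ T ∘ₗ aAnn m s

/-- The number operator `N = Σ_s a_s† ∘ a_s`. -/
def numOp (m : ℕ) : Module.End ℂ (V m) := ∑ s, aDag m s ∘ₗ aAnn m s

end

/-- The second-quantized operator `D_h = Σ_{i,j} h_{ij} a_i† ∘ a_j` associated with an
`m × m` complex matrix `h`. -/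
noncomputable def Dop (m : ℕ) (h : Matrix (Fin m) (Fin m) ℂ) : Module.End ℂ (V m) :=
  ∑ i, ∑ j, h i j • (aDag m i ∘ₗ aAnn m j)

/-- The adjoint action `ad_h(T) = D_h ∘ T − T ∘ D_h` of the quadratic Hamiltonian `D_h`. -/
noncomputable def adOp (m : ℕ) (h : Matrix (Fin m) (Fin m) ℂ)
    (T : Module.End ℂ (V m)) : Module.End ℂ (V m) :=
  Dop m h ∘ₗ T - T ∘ₗ Dop m h

/-! The commutation relations `⁅aₛ, a†ₜ⁆ = δₛₜ`, `⁅aₛ, aₜ⁆ = 0`, `⁅a†ₛ, a†ₜ⁆ = 0` give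
`⁅aₛ, D_h⁆ = ∑ₜ hₛₜ aₜ` and `⁅D_h, a†ₛ⁆ = ∑ₜ hₜₛ a†ₜ`. Then
`aₛ ⁅D, T⁆ a†ₛ = ⁅D, aₛ T a†ₛ⁆ + ⁅aₛ, D⁆ T a†ₛ - aₛ T ⁅D, a†ₛ⁆`, and after summing over `s` both
correction terms become `∑ₛₜ hₛₜ aₜ T a†ₛ`, so they cancel. For `R` the same argument applies with
`a` and `a†` exchanged and `h` replaced by `-hᵀ`. -/

namespace Ring

variable {ι R A : Type*} [CommSemiring R] [Ring A] [Algebra R A]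

theorem lie_mul (x y z : A) : ⁅x, y * z⁆ = ⁅x, y⁆ * z + y * ⁅x, z⁆ := by
  simp only [lie_def]
  noncomm_ring

theorem mul_lie (x y z : A) : ⁅x * y, z⁆ = x * ⁅y, z⁆ + ⁅x, z⁆ * y := by
  simp only [lie_def]
  noncomm_ring

theorem lie_smul (x : A) (c : R) (y : A) : ⁅x, c • y⁆ = c • ⁅x, y⁆ := by
  simp only [lie_def, mul_smul_comm, smul_mul_assoc, smul_sub]

theorem smul_lie (c : R) (x y : A) : ⁅c • x, y⁆ = c • ⁅x, y⁆ := by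
  simp only [lie_def, mul_smul_comm, smul_mul_assoc, smul_sub]

theorem lie_sum (x : A) (s : Finset ι) (f : ι → A) : ⁅x, ∑ i ∈ s, f i⁆ = ∑ i ∈ s, ⁅x, f i⁆ := by
  simp only [lie_def, Finset.mul_sum, Finset.sum_mul, Finset.sum_sub_distrib]

theorem sum_lie (s : Finset ι) (f : ι → A) (x : A) : ⁅∑ i ∈ s, f i, x⁆ = ∑ i ∈ s, ⁅f i, x⁆ := by
  simp only [lie_def, Finset.mul_sum, Finset.sum_mul, Finset.sum_sub_distrib]

theorem lie_skew (x y : A) : -⁅y, x⁆ = ⁅x, y⁆ := by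
  simp only [lie_def, neg_sub]

end Ring

section CanonicalCommutationRelations

variable {ι R A : Type*} [Fintype ι] [DecidableEq ι] [CommSemiring R] [Ring A] [Algebra R A]
  {a b : ι → A}

theorem lie_sum_smul_mul_of_ccr_left (h : Matrix ι ι R)
    (hab : ∀ s t, ⁅a s, b t⁆ = if s = t then 1 else 0) (haa : ∀ s t, Commute (a s) (a t))
    (s : ι) : ⁅a s, ∑ i, ∑ j, h i j • (b i * a j)⁆ = ∑ j, h s j • a j := by
  simp only [Ring.lie_sum, Ring.lie_smul, Ring.lie_mul, hab, (haa _ _).lie_eq, ite_mul, one_mul,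
    zero_mul, mul_zero, add_zero, smul_ite, smul_zero, Finset.sum_ite_irrel, Finset.sum_const_zero,
    Finset.sum_ite_eq, Finset.mem_univ, if_true]

theorem lie_sum_smul_mul_of_ccr_right (h : Matrix ι ι R)
    (hab : ∀ s t, ⁅a s, b t⁆ = if s = t then 1 else 0) (hbb : ∀ s t, Commute (b s) (b t))
    (t : ι) : ⁅∑ i, ∑ j, h i j • (b i * a j), b t⁆ = ∑ i, h i t • b i := by
  simp only [Ring.sum_lie, Ring.smul_lie, Ring.mul_lie, hab, (hbb _ _).lie_eq, mul_ite, mul_one,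
    mul_zero, zero_mul, add_zero, smul_ite, smul_zero, Finset.sum_ite_eq', Finset.mem_univ,
    if_true]

end CanonicalCommutationRelations

section Sandwich

variable {ι R A : Type*} [Fintype ι] [CommSemiring R] [Ring A] [Algebra R A]

theorem mul_lie_mul_eq_lie_mul_add (a D T b : A) :
    a * ⁅D, T⁆ * b = ⁅D, a * T * b⁆ + (⁅a, D⁆ * T * b - a * T * ⁅D, b⁆) := by
  simp only [Ring.lie_def]
  noncomm_ring

theorem sum_mul_lie_mul_eq_lie_sum (h : Matrix ι ι R) {a b : ι → A} {D : A}
    (ha : ∀ s, ⁅a s, D⁆ = ∑ t, h s t • a t) (hb : ∀ s, ⁅D, b s⁆ = ∑ t, h t s • b t) (T : A) :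
    ∑ s, a s * ⁅D, T⁆ * b s = ⁅D, ∑ s, a s * T * b s⁆ := by
  have correction : ∑ s, ⁅a s, D⁆ * T * b s = ∑ s, a s * T * ⁅D, b s⁆ := by
    simp only [ha, hb, Finset.sum_mul, Finset.mul_sum, smul_mul_assoc, mul_smul_comm]
    exact Finset.sum_comm
  simp only [mul_lie_mul_eq_lie_mul_add _ D T, Finset.sum_add_distrib, Finset.sum_sub_distrib,
    correction, sub_self, add_zero, Ring.lie_sum]

end Sandwich

theorem MvPolynomial.pderiv_pderiv_comm {σ R : Type*} [CommRing R] (i j : σ)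
    (p : MvPolynomial σ R) : pderiv i (pderiv j p) = pderiv j (pderiv i p) := by
  have : ⁅pderiv i, pderiv j⁆ = (0 : Derivation R (MvPolynomial σ R) (MvPolynomial σ R)) :=
    derivation_ext fun k => by
      classical rw [Derivation.commutator_apply]; simp [pderiv_X, Pi.single_apply, apply_ite]
  have := congr($this p)
  rwa [Derivation.commutator_apply, Derivation.zero_apply, sub_eq_zero] at this

section FockSpace

variable (m : ℕ)

theorem commute_aAnn (s t : Fin m) : Commute (aAnn m s) (aAnn m t) :=
  LinearMap.ext fun p => pderiv_pderiv_comm s t p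

theorem commute_aDag (s t : Fin m) : Commute (aDag m s) (aDag m t) :=
  LinearMap.ext fun p => mul_left_comm (X s) (X t) p

theorem lie_aAnn_aDag (s t : Fin m) : ⁅aAnn m s, aDag m t⁆ = if s = t then 1 else 0 := by
  refine LinearMap.ext fun p => ?_
  rcases eq_or_ne s t with rfl | hst
  · simp [Ring.lie_def, aAnn, aDag]
  · simp [Ring.lie_def, aAnn, aDag, pderiv_X_of_ne hst.symm, hst]

theorem Dop_eq_sum (h : Matrix (Fin m) (Fin m) ℂ) :
    Dop m h = ∑ i, ∑ j, h i j • (aDag m i * aAnn m j) :=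
  rfl

theorem lie_aAnn_Dop (h : Matrix (Fin m) (Fin m) ℂ) (s : Fin m) :
    ⁅aAnn m s, Dop m h⁆ = ∑ t, h s t • aAnn m t := by
  rw [Dop_eq_sum]
  exact lie_sum_smul_mul_of_ccr_left h (lie_aAnn_aDag m) (commute_aAnn m) s

theorem lie_Dop_aDag (h : Matrix (Fin m) (Fin m) ℂ) (s : Fin m) :
    ⁅Dop m h, aDag m s⁆ = ∑ t, h t s • aDag m t := by
  rw [Dop_eq_sum]
  exact lie_sum_smul_mul_of_ccr_right h (lie_aAnn_aDag m) (commute_aDag m) s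

theorem adOp_eq_lie (h : Matrix (Fin m) (Fin m) ℂ) (T : Module.End ℂ (V m)) :
    adOp m h T = ⁅Dop m h, T⁆ :=
  rfl

theorem Lop_eq_sum (T : Module.End ℂ (V m)) : Lop m T = ∑ s, aAnn m s * T * aDag m s :=
  rfl

theorem Rop_eq_sum (T : Module.End ℂ (V m)) : Rop m T = ∑ s, aDag m s * T * aAnn m s :=
  rfl

end FockSpace

/-- The lowering and raising maps commute with the infinitesimal
action of passive linear optics: `L(ad_h(T)) = ad_h(L(T))` and `R(ad_h(T)) = ad_h(R(T))`
for every `m × m` complex matrix `h` and every `T ∈ End(V)`. -/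
theorem stmt18 (m : ℕ) (h : Matrix (Fin m) (Fin m) ℂ) (T : Module.End ℂ (V m)) :
    Lop m (adOp m h T) = adOp m h (Lop m T) ∧
      Rop m (adOp m h T) = adOp m h (Rop m T) := by
  have lie_aDag_Dop (s : Fin m) : ⁅aDag m s, Dop m h⁆ = ∑ t, -h t s • aDag m t := by
    rw [← Ring.lie_skew, lie_Dop_aDag, ← Finset.sum_neg_distrib]
    exact Finset.sum_congr rfl fun t _ => (neg_smul _ _).symm
  have lie_Dop_aAnn (s : Fin m) : ⁅Dop m h, aAnn m s⁆ = ∑ t, -h s t • aAnn m t := by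
    rw [← Ring.lie_skew, lie_aAnn_Dop, ← Finset.sum_neg_distrib]
    exact Finset.sum_congr rfl fun t _ => (neg_smul _ _).symm
  simp only [Lop_eq_sum, Rop_eq_sum, adOp_eq_lie]
  exact ⟨sum_mul_lie_mul_eq_lie_sum h (lie_aAnn_Dop m h) (lie_Dop_aDag m h) T,
    sum_mul_lie_mul_eq_lie_sum (-h.transpose) lie_aDag_Dop lie_Dop_aAnn T⟩
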